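/- For every k ≥ 1, the sum of the first 2k−1 Jacobsthal numbers equals J_{2k} (∑_{i=1}^{2k−1} J_i = J_{2k}), and the sum of the first 2k Jacobsthal numbers equals 2·J_{2k} (∑_{i=1}^{2k} J_i = 2J_{2k} = J_{2k+1} − 1). In both cases, 2k is the largest index of a Jacobsthal number dividing the sum: for every m > 2k, J_m does not divide J_{2k}, and for every m > 2k, J_m does not divide 2·J_{2k}. -/

import Mathlib

/-- The Jacobsthal numbers: J 0 = 0, J 1 = 1, J (n+2) = J (n+1) + 2 * J n. -/
def jacobsthal : ℕ → ℕ
  | 0 => 0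
  | 1 => 1
  | n + 2 => jacobsthal (n + 1) + 2 * jacobsthal n

/-! Both sums are `(J (n + 2) - 1) / 2`, and `J (2k + 1) = 2 J (2k) + 1` since
`J (n + 1) = 2 J n + (-1)^n`. As `J` is monotone, every `J m` with `m > 2k` exceeds
`2 J (2k) > 0`, so it cannot divide either sum. -/

theorem jacobsthal_add_two (n : ℕ) :
    jacobsthal (n + 2) = jacobsthal (n + 1) + 2 * jacobsthal n := rfl

theorem jacobsthal_monotone : Monotone jacobsthal :=
  monotone_nat_of_le_succ fun
    | 0 => by decide
    | n + 1 => by rw [jacobsthal_add_two]; omega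

theorem jacobsthal_pos {n : ℕ} (hn : 0 < n) : 0 < jacobsthal n :=
  Nat.lt_of_lt_of_le (by decide) (jacobsthal_monotone (Nat.one_le_iff_ne_zero.mpr hn.ne'))

theorem jacobsthal_succ_eq (n : ℕ) :
    (jacobsthal (n + 1) : ℤ) = 2 * jacobsthal n + (-1) ^ n := by
  induction n with
  | zero => decide
  | succ n ih =>
    rw [jacobsthal_add_two, pow_succ]
    push_cast
    linarith

theorem jacobsthal_two_mul_add_one (k : ℕ) :
    jacobsthal (2 * k + 1) = 2 * jacobsthal (2 * k) + 1 := by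
  have h := jacobsthal_succ_eq (2 * k)
  rw [(even_two_mul k).neg_one_pow] at h
  exact_mod_cast h

theorem two_mul_sum_Icc_jacobsthal_add_one (n : ℕ) :
    2 * ∑ i ∈ Finset.Icc 1 n, jacobsthal i + 1 = jacobsthal (n + 2) := by
  induction n with
  | zero => rfl
  | succ n ih =>
    rw [Finset.sum_Icc_succ_top (by omega), jacobsthal_add_two (n + 1), ← ih]
    ring

theorem two_mul_jacobsthal_two_mul_lt {k m : ℕ} (hm : 2 * k < m) :
    2 * jacobsthal (2 * k) < jacobsthal m :=
  calc 2 * jacobsthal (2 * k) < jacobsthal (2 * k + 1) := by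
        rw [jacobsthal_two_mul_add_one]; omega
    _ ≤ jacobsthal m := jacobsthal_monotone hm

/-- The sum of the first 2k-1 Jacobsthal numbers is J_{2k}, the sum of the first
2k is 2 J_{2k} = J_{2k+1} - 1, and in both cases 2k is the largest index of a
Jacobsthal number dividing the sum. -/
theorem jacobsthal_partial_sums (k : ℕ) (hk : 1 ≤ k) :
    (∑ i ∈ Finset.Icc 1 (2 * k - 1), jacobsthal i) = jacobsthal (2 * k) ∧
    (∑ i ∈ Finset.Icc 1 (2 * k), jacobsthal i) = 2 * jacobsthal (2 * k) ∧
    2 * jacobsthal (2 * k) = jacobsthal (2 * k + 1) - 1 ∧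
    (∀ m : ℕ, 2 * k < m → ¬ jacobsthal m ∣ jacobsthal (2 * k)) ∧
    (∀ m : ℕ, 2 * k < m → ¬ jacobsthal m ∣ 2 * jacobsthal (2 * k)) := by
  have hodd := jacobsthal_two_mul_add_one k
  have hsum_odd := two_mul_sum_Icc_jacobsthal_add_one (2 * k - 1)
  rw [show 2 * k - 1 + 2 = 2 * k + 1 by omega] at hsum_odd
  have hsum_even := two_mul_sum_Icc_jacobsthal_add_one (2 * k)
  rw [jacobsthal_add_two] at hsum_even
  have hpos : 0 < jacobsthal (2 * k) := jacobsthal_pos (by omega)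
  refine ⟨by omega, by omega, by omega, fun m hm => ?_, fun m hm => ?_⟩
  · exact Nat.not_dvd_of_pos_of_lt hpos (by have := two_mul_jacobsthal_two_mul_lt hm; omega)
  · exact Nat.not_dvd_of_pos_of_lt (by omega) (two_mul_jacobsthal_two_mul_lt hm)
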